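/- Under Assumptions (a)–(f) below, any sequence of measurable maximizers η̂ₙ = (θ̂ₙ, α̂ₙ) ∈ argmax_{η∈𝒞×Π} L̃ₙ^{(ℓ)}(η) of the stage-ℓ weighted FFT plug-in criterion L̃ₙ^{(ℓ)}(η) = Σ_{i=1}^n ŵ_i·log{α f₀(Y_i;θ) + (1−α)·f̃ₙ^FFT(Y_i)} converges in probability to η* = (θ*_ℓ, α*), the unique maximizer of the oracle criterion L^{(ℓ)}(η) = E_{f^{(ℓ)}}[log{α f₀(Y;θ) + (1−α) f_bg^{(ℓ)}(Y)}]. -/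

import Mathlib

/-!
Maximizer consistency follows from uniform convergence in probability of the plug-in
criterion to the oracle one on the compact parameter set, via the usual gap argument around
the unique maximizer. Uniform convergence splits into two parts. The oracle criterion obeys a
uniform law of large numbers for the weights: truncate at a level where a measurable envelope
has small mass, and use that the log-mixture densities are equicontinuous in the parameter on
bounded windows (there the densities are bounded below) to reduce to finitely many
parameters. The plug-in and oracle criteria differ, inside the window `|y| ≤ Mₙ`, by at most
`2 rₙ / (ᾱ c(Mₙ)) → 0`, since `log` is `1/m`-Lipschitz above `m`; outside it, by the two
envelopes, whose weighted tail sums vanish in probability.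
-/

open MeasureTheory Filter Topology Set

theorem abs_log_sub_log_le {x y m : ℝ} (hm : 0 < m) (hx : m ≤ x) (hy : m ≤ y) :
    |Real.log x - Real.log y| ≤ |x - y| / m := by
  wlog hxy : y ≤ x generalizing x y
  · rw [abs_sub_comm, abs_sub_comm x]
    exact this hy hx (le_of_not_ge hxy)
  have hy0 : 0 < y := hm.trans_le hy
  rw [abs_of_nonneg (sub_nonneg.2 (Real.log_le_log hy0 hxy)), abs_of_nonneg (sub_nonneg.2 hxy),
    ← Real.log_div (hm.trans_le hx).ne' hy0.ne']
  calc Real.log (x / y) ≤ x / y - 1 := Real.log_le_sub_one_of_pos (div_pos (hm.trans_le hx) hy0)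
    _ = (x - y) / y := by field_simp
    _ ≤ (x - y) / m := div_le_div_of_nonneg_left (sub_nonneg.2 hxy) hm hy

theorem abs_log_sub_log_le_of_abs_sub_le {x y m d : ℝ} (hm : 0 < m) (hy : m ≤ y)
    (hxy : |x - y| ≤ d) (hd : 2 * d ≤ m) : |Real.log x - Real.log y| ≤ 2 * d / m := by
  have hx : m / 2 ≤ x := by linarith [neg_abs_le (x - y)]
  calc |Real.log x - Real.log y| ≤ |x - y| / (m / 2) :=
        abs_log_sub_log_le (half_pos hm) hx (by linarith)
    _ ≤ d / (m / 2) := by gcongr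
    _ = 2 * d / m := by field_simp

theorem abs_mix_sub_mix_le {α α' u u' v B : ℝ} (hα : α ∈ Icc (0 : ℝ) 1)
    (hu' : u' ∈ Icc 0 B) (hv : v ∈ Icc 0 B) :
    |(α * u + (1 - α) * v) - (α' * u' + (1 - α') * v)| ≤ |u - u'| + |α - α'| * B := by
  have hu'v : |u' - v| ≤ B :=
    abs_sub_le_iff.2 ⟨by linarith [hu'.2, hv.1], by linarith [hu'.1, hv.2]⟩
  calc |(α * u + (1 - α) * v) - (α' * u' + (1 - α') * v)|
      = |α * (u - u') + (α - α') * (u' - v)| := by ring_nf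
    _ ≤ |α| * |u - u'| + |α - α'| * |u' - v| := by
        rw [← abs_mul, ← abs_mul]; exact abs_add_le _ _
    _ ≤ 1 * |u - u'| + |α - α'| * B := by
        gcongr
        rw [abs_of_nonneg hα.1]; exact hα.2
    _ = |u - u'| + |α - α'| * B := by ring

theorem exists_add_le_of_isCompact {X : Type*} [TopologicalSpace X] {K : Set X}
    (hK : IsCompact K) {L : X → ℝ} (hL : ContinuousOn L K) {c : ℝ} (hlt : ∀ x ∈ K, L x < c) :
    ∃ e > 0, ∀ x ∈ K, L x + e ≤ c := by
  rcases K.eq_empty_or_nonempty with rfl | hne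
  · exact ⟨1, one_pos, by simp⟩
  obtain ⟨x₀, hx₀, hmax⟩ := hK.exists_isMaxOn hne hL
  exact ⟨c - L x₀, sub_pos.2 (hlt x₀ hx₀), fun x hx => by linarith [show L x ≤ L x₀ from hmax hx]⟩

theorem abs_sum_mul_sub_sum_mul_le {ι : Type*} (s : Finset ι) {w a b c : ι → ℝ}
    (hw : ∀ i ∈ s, 0 ≤ w i) (h : ∀ i ∈ s, |a i - b i| ≤ c i) :
    |∑ i ∈ s, w i * a i - ∑ i ∈ s, w i * b i| ≤ ∑ i ∈ s, w i * c i := by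
  rw [← Finset.sum_sub_distrib]
  refine (Finset.abs_sum_le_sum_abs _ _).trans (Finset.sum_le_sum fun i hi => ?_)
  rw [← mul_sub, abs_mul, abs_of_nonneg (hw i hi)]
  exact mul_le_mul_of_nonneg_left (h i hi) (hw i hi)

theorem abs_sum_sub_integral_le_of_abs_sub_le {ι : Type*} (s : Finset ι) {w : ι → ℝ}
    (hw : ∀ i, 0 ≤ w i) (z : ι → ℝ) {f φ φ' g : ℝ → ℝ} {η : ℝ} (hf0 : ∀ y, 0 ≤ f y)
    (hfi : Integrable f) (hφ : Integrable fun y => φ y * f y)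
    (hφ' : Integrable fun y => φ' y * f y) (hg : Integrable fun y => g y * f y)
    (hclose : ∀ y, |φ y - φ' y| ≤ η + g y) :
    |∑ i ∈ s, w i * φ (z i) - ∫ y, φ y * f y|
      ≤ |∑ i ∈ s, w i * φ' (z i) - ∫ y, φ' y * f y| + η * (∑ i ∈ s, w i + ∫ y, f y)
        + ∑ i ∈ s, w i * g (z i) + ∫ y, g y * f y := by
  have hsum : |∑ i ∈ s, w i * φ (z i) - ∑ i ∈ s, w i * φ' (z i)|
      ≤ η * ∑ i ∈ s, w i + ∑ i ∈ s, w i * g (z i) := by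
    rw [Finset.mul_sum, ← Finset.sum_add_distrib]
    refine (abs_sum_mul_sub_sum_mul_le s (fun i _ => hw i) fun i _ => hclose (z i)).trans_eq
      (Finset.sum_congr rfl fun i _ => by ring)
  have hint : |(∫ y, φ y * f y) - ∫ y, φ' y * f y| ≤ η * (∫ y, f y) + ∫ y, g y * f y := by
    rw [show (∫ y, φ y * f y) - ∫ y, φ' y * f y = ∫ y, (φ y * f y - φ' y * f y) from
      (integral_sub hφ hφ').symm, ← integral_const_mul,
      show (∫ y, η * f y) + ∫ y, g y * f y = ∫ y, (η * f y + g y * f y) from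
      (integral_add (hfi.const_mul η) hg).symm]
    refine (abs_integral_le_integral_abs).trans
      (integral_mono (hφ.sub hφ').abs ((hfi.const_mul η).add hg) fun y => ?_)
    simp only [← sub_mul, abs_mul, abs_of_nonneg (hf0 y)]
    nlinarith [hclose y, hf0 y]
  have htri := abs_sub_le (∑ i ∈ s, w i * φ (z i)) (∑ i ∈ s, w i * φ' (z i)) (∫ y, φ y * f y)
  have htri' := abs_sub_le (∑ i ∈ s, w i * φ' (z i)) (∫ y, φ' y * f y) (∫ y, φ y * f y)
  rw [abs_sub_comm (∫ y, φ' y * f y)] at htri'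
  linarith [mul_add η (∑ i ∈ s, w i) (∫ y, f y)]

theorem tendsto_integral_indicator_lt_abs {g : ℝ → ℝ} (hg : Integrable g) :
    Tendsto (fun T : ℕ => ∫ y, {y : ℝ | (T : ℝ) < |y|}.indicator g y) atTop (𝓝 0) := by
  have hmeas : ∀ T : ℕ, MeasurableSet {y : ℝ | (T : ℝ) < |y|} := fun T =>
    measurableSet_lt measurable_const measurable_abs
  have hanti : Antitone fun T : ℕ => {y : ℝ | (T : ℝ) < |y|} := fun T T' hTT' y hy =>
    show (T : ℝ) < |y| from lt_of_le_of_lt (Nat.cast_le.2 hTT') hy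
  have hempty : (⋂ T : ℕ, {y : ℝ | (T : ℝ) < |y|}) = ∅ :=
    eq_empty_of_forall_notMem fun y hy =>
      let ⟨T, hT⟩ := exists_nat_ge |y|
      (mem_iInter.1 hy T).not_ge hT
  simpa only [integral_indicator (hmeas _), hempty, Measure.restrict_empty, integral_zero_measure]
    using tendsto_setIntegral_of_antitone hmeas hanti ⟨0, hg.integrableOn⟩

theorem exists_measurable_envelope {X : Type*} [TopologicalSpace X] [SecondCountableTopology X]
    {S : Set X} {ψ : X → ℝ → ℝ} (hψm : ∀ p, Measurable (ψ p))
    (hψc : ∀ y, ContinuousOn (fun p => ψ p y) S) {H : ℝ → ℝ} (hH0 : ∀ y, 0 ≤ H y)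
    (hH : ∀ p ∈ S, ∀ y, |ψ p y| ≤ H y) :
    ∃ Ψ : ℝ → ℝ, Measurable Ψ ∧ (∀ p ∈ S, ∀ y, |ψ p y| ≤ Ψ y) ∧ ∀ y, Ψ y ∈ Icc 0 (H y) := by
  obtain ⟨D, hDc, hDd⟩ := TopologicalSpace.exists_countable_dense S
  have := hDc.to_subtype
  have hbdd : ∀ y, BddAbove (range fun q : D => |ψ q y|) := fun y =>
    ⟨H y, by rintro _ ⟨q, rfl⟩; exact hH _ (q : S).2 y⟩
  refine ⟨fun y => ⨆ q : D, |ψ q y|, Measurable.iSup fun q => (hψm _).abs, fun p hp y => ?_,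
    fun y => ⟨Real.iSup_nonneg fun q => abs_nonneg _,
      Real.iSup_le (fun q => hH _ (q : S).2 y) (hH0 y)⟩⟩
  refine hDd.induction (P := fun q : S => |ψ q y| ≤ ⨆ q : D, |ψ q y|)
    (fun q hq => le_ciSup (hbdd y) ⟨q, hq⟩)
    (isClosed_le ((hψc y).domRestrict.abs) continuous_const) ⟨p, hp⟩

section Measure

variable {Ω ι : Type*} [MeasurableSpace Ω] {μ : Measure Ω} {l : Filter ι}

theorem tendsto_measure_of_ae_subset_union {s t u : ι → Set Ω}
    (h : ∀ᶠ i in l, s i ≤ᵐ[μ] (t i ∪ u i : Set Ω)) (ht : Tendsto (fun i => μ (t i)) l (𝓝 0))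
    (hu : Tendsto (fun i => μ (u i)) l (𝓝 0)) : Tendsto (fun i => μ (s i)) l (𝓝 0) := by
  have htu := ht.add hu
  rw [add_zero] at htu
  refine tendsto_of_tendsto_of_tendsto_of_le_of_le' tendsto_const_nhds htu
    (Eventually.of_forall fun _ => zero_le) ?_
  filter_upwards [h] with i hi using (measure_mono_ae hi).trans (measure_union_le _ _)

theorem tendsto_measure_biUnion_finset {κ : Type*} (t : Finset κ) {E : κ → ι → Set Ω}
    (h : ∀ j ∈ t, Tendsto (fun i => μ (E j i)) l (𝓝 0)) :
    Tendsto (fun i => μ (⋃ j ∈ t, E j i)) l (𝓝 0) := by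
  have hsum := tendsto_finsetSum t h
  rw [Finset.sum_const_zero] at hsum
  exact tendsto_of_tendsto_of_tendsto_of_le_of_le tendsto_const_nhds hsum (fun _ => zero_le)
    fun i => measure_biUnion_finset_le t _

theorem tendsto_measure_pos_of_forall_nat_mul (S : ι → Ω → ℝ)
    (hS : ∀ m : ι → ℕ, Tendsto (fun i => μ {ω | 1 ≤ ((m i : ℝ) + 1) * S i ω}) l (𝓝 0)) :
    Tendsto (fun i => μ {ω | 0 < S i ω}) l (𝓝 0) := by
  refine ENNReal.tendsto_nhds_zero.2 fun q hq => ?_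
  -- By continuity from below, if `{0 < S i}` has mass above `q`, so has a level set
  -- `{1 ≤ (k + 1) * S i}`; choosing such levels `m i` reduces the claim to `hS m`.
  have hlevel : ∀ i, ∃ k : ℕ, q < μ {ω | 0 < S i ω} →
      q < μ {ω | 1 ≤ ((k : ℝ) + 1) * S i ω} := by
    intro i
    by_cases hqi : q < μ {ω | 0 < S i ω}
    · have hmono : Monotone fun k : ℕ => {ω | 1 ≤ ((k : ℝ) + 1) * S i ω} := by
        intro k k' hkk' ω hω
        replace hω : 1 ≤ ((k : ℝ) + 1) * S i ω := hω
        have hpos : 0 < S i ω := pos_of_mul_pos_right (one_pos.trans_le hω) (by positivity)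
        exact hω.trans (by gcongr)
      have hunion : {ω | 0 < S i ω} = ⋃ k : ℕ, {ω | 1 ≤ ((k : ℝ) + 1) * S i ω} := by
        ext ω
        simp only [mem_ofPred_eq, mem_iUnion]
        refine ⟨fun hpos => ?_, fun ⟨k, hk⟩ =>
          pos_of_mul_pos_right (one_pos.trans_le hk) (by positivity)⟩
        obtain ⟨k, hk⟩ := exists_nat_ge (S i ω)⁻¹
        refine ⟨k, (div_le_iff₀ hpos).1 ?_⟩
        rw [one_div]
        linarith
      rw [hunion, hmono.measure_iUnion] at hqi
      obtain ⟨k, hk⟩ := lt_iSup_iff.1 hqi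
      exact ⟨k, fun _ => hk⟩
    · exact ⟨0, fun h => absurd h hqi⟩
  choose m hm using hlevel
  filter_upwards [ENNReal.tendsto_nhds_zero.1 (hS m) q hq] with i hi
  by_contra hlt
  exact (hm i (not_le.1 hlt)).not_ge hi

theorem tendsto_measure_exists_abs_sub_of_tendsto {X : Type*} {S : Set X}
    {A C : ι → Ω → X → ℝ} {B : X → ℝ}
    (hAC : ∀ e > 0, Tendsto (fun n => μ {ω | ∃ p ∈ S, e ≤ |A n ω p - C n ω p|}) l (𝓝 0))
    (hCB : ∀ e > 0, Tendsto (fun n => μ {ω | ∃ p ∈ S, e ≤ |C n ω p - B p|}) l (𝓝 0))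
    {e : ℝ} (he : 0 < e) :
    Tendsto (fun n => μ {ω | ∃ p ∈ S, e ≤ |A n ω p - B p|}) l (𝓝 0) := by
  refine tendsto_measure_of_ae_subset_union (Eventually.of_forall fun n => LE.le.eventuallyLE
    fun ω ⟨p, hp, hdev⟩ => ?_) (hAC (e / 2) (half_pos he)) (hCB (e / 2) (half_pos he))
  by_contra hno
  simp only [mem_union, mem_ofPred_eq, not_or, not_exists, not_and, not_le] at hno
  linarith [abs_sub_le (A n ω p) (C n ω p) (B p), hno.1 p hp, hno.2 p hp]

theorem tendsto_measure_notMem_of_uniform_approx {X : Type*} [TopologicalSpace X] {S U : Set X}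
    (hS : IsCompact S) (hU : IsOpen U) {L : X → ℝ} (hL : ContinuousOn L S) {x₀ : X}
    (hx₀ : x₀ ∈ S) (hx₀U : x₀ ∈ U)
    (hmax : ∀ x ∈ S, x ≠ x₀ → L x < L x₀) (Ln : ι → Ω → X → ℝ) (xhat : ι → Ω → X)
    (hmem : ∀ n ω, xhat n ω ∈ S) (hge : ∀ n ω, Ln n ω x₀ ≤ Ln n ω (xhat n ω))
    (hunif : ∀ e > 0, Tendsto (fun n => μ {ω | ∃ x ∈ S, e ≤ |Ln n ω x - L x|}) l (𝓝 0)) :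
    Tendsto (fun n => μ {ω | xhat n ω ∉ U}) l (𝓝 0) := by
  obtain ⟨e, he, hgap⟩ := exists_add_le_of_isCompact (hS.diff hU) (hL.mono sdiff_subset)
    fun x hx => hmax x hx.1 fun h => hx.2 (h ▸ hx₀U)
  refine tendsto_of_tendsto_of_tendsto_of_le_of_le tendsto_const_nhds (hunif (e / 2) (half_pos he))
    (fun _ => zero_le) fun n => measure_mono fun ω hω => by_contra fun hω' => ?_
  have hclose : ∀ x ∈ S, |Ln n ω x - L x| < e / 2 := fun x hx => not_le.1 fun h => hω' ⟨x, hx, h⟩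
  have hhat := abs_lt.1 (hclose _ (hmem n ω))
  have hstar := abs_lt.1 (hclose x₀ hx₀)
  linarith [hgap _ ⟨hmem n ω, hω⟩, hge n ω]

theorem tendsto_measure_of_tendsto_measure_inter {s : ℕ → Set Ω} {good : ℝ → ℕ → Set Ω}
    (hgood : ∀ δ > 0, ∃ K, limsup (fun n => μ (good K n)ᶜ) atTop < ENNReal.ofReal δ)
    (h : ∀ K, Tendsto (fun n => μ (s n ∩ good K n)) atTop (𝓝 0)) :
    Tendsto (fun n => μ (s n)) atTop (𝓝 0) := by
  refine tendsto_of_le_liminf_of_limsup_le zero_le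
    (ENNReal.le_of_forall_pos_le_add fun δ hδ _ => ?_)
  obtain ⟨K, hK⟩ := hgood δ hδ
  calc limsup (fun n => μ (s n)) atTop
      ≤ limsup (fun n => μ (s n ∩ good K n) + ENNReal.ofReal δ) atTop := by
        refine limsup_le_limsup ?_
        filter_upwards [eventually_lt_of_limsup_lt hK] with n hn
        refine (measure_mono fun ω hω => ?_).trans ((measure_union_le _ _).trans (by gcongr))
        by_cases hω' : ω ∈ good K n
        exacts [Or.inl ⟨hω, hω'⟩, Or.inr hω']
    _ = 0 + δ := by
        rw [((h K).add tendsto_const_nhds).limsup_eq, ENNReal.ofReal_coe_nnreal]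

end Measure

section WeightedSums

variable {Ω : Type*} [MeasurableSpace Ω]

def WeightedLLN (P : Measure Ω) (w : ℕ → ℕ → Ω → ℝ) (Y : ℕ → Ω → ℝ) (f : ℝ → ℝ) : Prop :=
  ∀ Φ : ℝ → ℝ, Measurable Φ → Integrable (fun y => Φ y * f y) → ∀ δ > 0,
    Tendsto (fun n => P {ω | δ ≤
      |∑ i ∈ Finset.range n, w n i ω * Φ (Y i ω) - ∫ y, Φ y * f y|}) atTop (𝓝 0)

namespace WeightedLLN

variable {P : Measure Ω} {w : ℕ → ℕ → Ω → ℝ} {Y : ℕ → Ω → ℝ} {f : ℝ → ℝ}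

theorem tendsto_measure_sum_weights (hLLN : WeightedLLN P w Y f) (hf : Integrable f) :
    Tendsto (fun n => P {ω | 1 ≤ |∑ i ∈ Finset.range n, w n i ω - ∫ y, f y|}) atTop (𝓝 0) := by
  simpa using hLLN (fun _ => 1) measurable_const (by simpa using hf) 1 one_pos

theorem tendsto_measure_pos_sum_indicator_null (hLLN : WeightedLLN P w Y f)
    (hw : ∀ n i ω, 0 ≤ w n i ω) {N : Set ℝ} (hN : MeasurableSet N) (hN0 : volume N = 0)
    {M : ℕ → ℝ} (hM : Tendsto M atTop atTop) :
    Tendsto (fun n => P {ω | 0 < ∑ i ∈ Finset.range n,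
      w n i ω * (N ∩ {y | M n < |y|}).indicator 1 (Y i ω)}) atTop (𝓝 0) := by
  refine tendsto_measure_pos_of_forall_nat_mul _ fun m => ?_
  set F : ℕ → ℝ → ℝ := fun n => (N ∩ {y | M n < |y|}).indicator fun _ => (m n : ℝ) + 1
  have hFm : ∀ n, Measurable (F n) := fun n =>
    measurable_const.indicator (hN.inter (measurableSet_lt measurable_const measurable_abs))
  have hbdd : ∀ y, BddAbove (range fun n => F n y) := fun y =>
    (tendsto_const_nhds.congr' (by
      filter_upwards [hM.eventually_ge_atTop |y|] with n hn
      exact (indicator_of_notMem (fun h => h.2.not_ge hn) _).symm)).bddAbove_range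
  -- `Φ` is finite since `M n → ∞`, and vanishes off the null set `N`, so the weighted LLN
  -- applies to it; it dominates `(m n + 1)` times the indicator in the sum.
  set Φ : ℝ → ℝ := fun y => ⨆ n, F n y
  have hΦ0 : ∀ y, y ∉ N → Φ y = 0 := fun y hy => by
    simp [Φ, F, indicator_of_notMem (fun h : y ∈ N ∩ _ => hy h.1)]
  have hΦf : (fun y => Φ y * f y) =ᵐ[volume] 0 := by
    filter_upwards [measure_eq_zero_iff_ae_notMem.1 hN0] with y hy
    simp [hΦ0 y hy]
  refine tendsto_of_tendsto_of_tendsto_of_le_of_le tendsto_const_nhds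
    (hLLN Φ (Measurable.iSup hFm) ((integrable_zero _ _ _).congr hΦf.symm) 1 one_pos)
    (fun _ => zero_le) fun n => measure_mono fun ω hω => ?_
  have hΦnn : ∀ y, 0 ≤ Φ y := fun y =>
    (indicator_nonneg (fun _ _ => by positivity) y).trans (le_ciSup (hbdd y) 0)
  replace hω : 1 ≤ ((m n : ℝ) + 1) *
    ∑ i ∈ Finset.range n, w n i ω * (N ∩ {y | M n < |y|}).indicator 1 (Y i ω) := hω
  rw [mem_ofPred_eq, integral_congr_ae hΦf, Pi.zero_def, integral_zero, sub_zero,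
    abs_of_nonneg (Finset.sum_nonneg fun i _ => mul_nonneg (hw n i ω) (hΦnn _))]
  refine hω.trans ?_
  rw [Finset.mul_sum]
  refine Finset.sum_le_sum fun i _ => ?_
  calc ((m n : ℝ) + 1) * (w n i ω * (N ∩ {y | M n < |y|}).indicator 1 (Y i ω))
      = w n i ω * F n (Y i ω) := by
        by_cases h : Y i ω ∈ N ∩ {y | M n < |y|} <;> simp [F, h, mul_comm]
    _ ≤ w n i ω * Φ (Y i ω) := by gcongr; exacts [hw n i ω, le_ciSup (hbdd _) n]

theorem tendsto_measure_tail_sum_of_measurable (hLLN : WeightedLLN P w Y f)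
    (hw : ∀ n i ω, 0 ≤ w n i ω) {H : ℝ → ℝ} (hHm : Measurable H) (hH0 : ∀ y, 0 ≤ H y)
    (hHi : Integrable fun y => H y * f y) {M : ℕ → ℝ} (hM : Tendsto M atTop atTop) {e : ℝ}
    (he : 0 < e) :
    Tendsto (fun n => P {ω | e ≤
      ∑ i ∈ Finset.range n, w n i ω * {y | M n < |y|}.indicator H (Y i ω)}) atTop (𝓝 0) := by
  obtain ⟨T, hT⟩ :=
    ((tendsto_integral_indicator_lt_abs hHi).eventually (gt_mem_nhds (half_pos he))).exists
  have hTm : MeasurableSet {y : ℝ | (T : ℝ) < |y|} :=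
    measurableSet_lt measurable_const measurable_abs
  set Φ := {y : ℝ | (T : ℝ) < |y|}.indicator H
  have hΦf : (fun y => Φ y * f y) = {y : ℝ | (T : ℝ) < |y|}.indicator fun y => H y * f y :=
    funext fun y => (indicator_mul_left _ _ _).symm
  have hΦi : Integrable fun y => Φ y * f y := hΦf ▸ hHi.indicator hTm
  refine tendsto_of_tendsto_of_tendsto_of_le_of_le' tendsto_const_nhds
    (hLLN Φ (hHm.indicator hTm) hΦi (e / 2) (half_pos he))
    (Eventually.of_forall fun _ => zero_le) ?_
  filter_upwards [hM.eventually_ge_atTop (T : ℝ)] with n hn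
  refine measure_mono fun ω hω => ?_
  replace hω : e ≤ ∑ i ∈ Finset.range n, w n i ω * {y | M n < |y|}.indicator H (Y i ω) := hω
  have hle : ∑ i ∈ Finset.range n, w n i ω * {y | M n < |y|}.indicator H (Y i ω)
      ≤ ∑ i ∈ Finset.range n, w n i ω * Φ (Y i ω) :=
    Finset.sum_le_sum fun i _ => mul_le_mul_of_nonneg_left
      (indicator_le_indicator_of_subset (fun y (hy : M n < |y|) => hn.trans_lt hy) hH0 _)
      (hw n i ω)
  have hint : ∫ y, Φ y * f y < e / 2 := by rwa [hΦf]
  show e / 2 ≤ |∑ i ∈ Finset.range n, w n i ω * Φ (Y i ω) - ∫ y, Φ y * f y|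
  linarith [le_abs_self (∑ i ∈ Finset.range n, w n i ω * Φ (Y i ω) - ∫ y, Φ y * f y)]

/-- The envelope `G` need not be measurable: it agrees with a measurable function off a null
set `N`, and the samples falling in `N` far out carry no weight with probability tending to
one. -/
theorem tendsto_measure_tail_sum (hLLN : WeightedLLN P w Y f) (hw : ∀ n i ω, 0 ≤ w n i ω)
    (hfm : Measurable f) (hfpos : ∀ y, 0 < f y) {G : ℝ → ℝ} (hG0 : ∀ y, 0 ≤ G y)
    (hGi : Integrable fun y => G y * f y) {M : ℕ → ℝ} (hM : Tendsto M atTop atTop) {e : ℝ}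
    (he : 0 < e) :
    Tendsto (fun n => P {ω | e ≤
      ∑ i ∈ Finset.range n, w n i ω * {y | M n < |y|}.indicator G (Y i ω)}) atTop (𝓝 0) := by
  have hGae : AEMeasurable G := (hGi.aemeasurable.mul hfm.inv.aemeasurable).congr
    (Eventually.of_forall fun y => mul_inv_cancel_right₀ (hfpos y).ne' (G y))
  set H : ℝ → ℝ := fun y => max (hGae.mk G y) 0
  have hGH : G =ᵐ[volume] H := by
    filter_upwards [hGae.ae_eq_mk] with y hy
    simp only [H, ← hy, max_eq_left (hG0 y)]
  set N := toMeasurable volume {y | G y ≠ H y}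
  have hN0 : volume N = 0 := by rw [measure_toMeasurable]; exact hGH
  have hGHN : ∀ y ∉ N, G y = H y := fun y hy => not_not.1 fun h => hy (subset_toMeasurable _ _ h)
  refine tendsto_measure_of_ae_subset_union
    (Eventually.of_forall fun n => LE.le.eventuallyLE fun ω hω => ?_)
    (hLLN.tendsto_measure_tail_sum_of_measurable hw (hGae.measurable_mk.max measurable_const)
      (fun y => le_max_right _ _) (hGi.congr (by filter_upwards [hGH] with y hy; rw [hy])) hM he)
    (hLLN.tendsto_measure_pos_sum_indicator_null hw (measurableSet_toMeasurable _ _) hN0 hM)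
  by_cases hpos : 0 < ∑ i ∈ Finset.range n, w n i ω * (N ∩ {y | M n < |y|}).indicator 1 (Y i ω)
  · exact Or.inr hpos
  have hterm : ∀ i ∈ Finset.range n,
      0 ≤ w n i ω * (N ∩ {y | M n < |y|}).indicator 1 (Y i ω) := fun i _ =>
    mul_nonneg (hw n i ω) (indicator_nonneg (fun _ _ => zero_le_one) _)
  have hnull := (Finset.sum_eq_zero_iff_of_nonneg hterm).1
    (le_antisymm (not_lt.1 hpos) (Finset.sum_nonneg hterm))
  refine Or.inl (show e ≤ _ from le_of_le_of_eq hω (Finset.sum_congr rfl fun i hi => ?_))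
  by_cases hfar : M n < |Y i ω|
  · by_cases hN : Y i ω ∈ N
    · have hwi := hnull i hi
      rw [indicator_of_mem (show Y i ω ∈ N ∩ {y | M n < |y|} from ⟨hN, hfar⟩), Pi.one_apply,
        mul_one] at hwi
      simp [hwi]
    · simp [indicator_of_mem (show Y i ω ∈ {y | M n < |y|} from hfar), hGHN _ hN, H]
  · have hfar' : Y i ω ∉ {y | M n < |y|} := hfar
    simp only [indicator_of_notMem hfar']

theorem tendsto_measure_exists_abs_sum_sub_integral_of_finite_approx {X κ : Type*}
    (hLLN : WeightedLLN P w Y f) (hw : ∀ n i ω, 0 ≤ w n i ω) (hf0 : ∀ y, 0 ≤ f y)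
    (hfi : Integrable f) {S : Set X} {ψ : X → ℝ → ℝ}
    (hψi : ∀ p ∈ S, Integrable fun y => ψ p y * f y) (t : Finset κ) {φ : κ → ℝ → ℝ}
    (hφm : ∀ j ∈ t, Measurable (φ j)) (hφi : ∀ j ∈ t, Integrable fun y => φ j y * f y)
    {g : ℝ → ℝ} (hgm : Measurable g) (hgi : Integrable fun y => g y * f y) {η : ℝ} (hη : 0 < η)
    (hgη : ∫ y, g y * f y < η) (happrox : ∀ p ∈ S, ∃ j ∈ t, ∀ y, |ψ p y - φ j y| ≤ η + g y) :
    Tendsto (fun n => P {ω | ∃ p ∈ S, η * (2 * (∫ y, f y) + 5) ≤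
      |∑ i ∈ Finset.range n, w n i ω * ψ p (Y i ω) - ∫ y, ψ p y * f y|}) atTop (𝓝 0) := by
  refine tendsto_measure_of_ae_subset_union (Eventually.of_forall fun n =>
      LE.le.eventuallyLE fun ω ⟨p, hp, hdev⟩ => ?_)
    (tendsto_measure_biUnion_finset t fun j hj => hLLN (φ j) (hφm j hj) (hφi j hj) η hη)
    (tendsto_measure_of_ae_subset_union (Eventually.of_forall fun _ => EventuallyLE.rfl)
      (hLLN.tendsto_measure_sum_weights hfi) (hLLN g hgm hgi η hη))
  obtain ⟨j, hjt, hpj⟩ := happrox p hp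
  by_contra hgood
  simp only [mem_union, mem_iUnion, mem_ofPred_eq, not_or, not_exists, not_le] at hgood
  obtain ⟨hgrid, hW, hg⟩ := hgood
  have hdet := abs_sum_sub_integral_le_of_abs_sub_le (Finset.range n) (hw n · ω) (Y · ω) hf0 hfi
    (hψi p hp) (hφi j hjt) hgi hpj
  have hWt := mul_lt_mul_of_pos_left (add_lt_add_right (abs_lt.1 hW).2 (∫ y, f y)) hη
  linarith [(abs_lt.1 hg).2, hgrid j hjt]

/-- Truncate at a level `T` beyond which the envelope has small mass, and cover `S` by finitely
many balls on which the family moves little on `|y| ≤ T`. -/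
theorem tendsto_measure_exists_abs_sum_sub_integral {X : Type*} [PseudoMetricSpace X]
    (hLLN : WeightedLLN P w Y f) (hw : ∀ n i ω, 0 ≤ w n i ω) (hfm : Measurable f)
    (hf0 : ∀ y, 0 ≤ f y) (hfi : Integrable f) {S : Set X} (hS : IsCompact S)
    {ψ : X → ℝ → ℝ} (hψm : ∀ p, Measurable (ψ p)) {Ψ : ℝ → ℝ} (hΨm : Measurable Ψ)
    (hΨ : ∀ p ∈ S, ∀ y, |ψ p y| ≤ Ψ y) (hΨi : Integrable fun y => Ψ y * f y)
    (hequi : ∀ T e : ℝ, 0 < e → ∃ ρ > 0, ∀ p ∈ S, ∀ q ∈ S, dist p q < ρ →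
      ∀ y, |y| ≤ T → |ψ p y - ψ q y| ≤ e) {e : ℝ} (he : 0 < e) :
    Tendsto (fun n => P {ω | ∃ p ∈ S,
      e ≤ |∑ i ∈ Finset.range n, w n i ω * ψ p (Y i ω) - ∫ y, ψ p y * f y|}) atTop (𝓝 0) := by
  have hf1 : 0 < 2 * (∫ y, f y) + 5 := by linarith [(integral_nonneg hf0 : 0 ≤ ∫ y, f y)]
  set η := e / (2 * (∫ y, f y) + 5)
  have hη : 0 < η := div_pos he hf1
  obtain ⟨T, hT⟩ :=
    ((tendsto_integral_indicator_lt_abs hΨi).eventually (gt_mem_nhds hη)).exists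
  set A := {y : ℝ | (T : ℝ) < |y|}
  have hTm : MeasurableSet A := measurableSet_lt measurable_const measurable_abs
  have hgf : (fun y => A.indicator Ψ y * f y) = A.indicator fun y => Ψ y * f y :=
    funext fun y => (indicator_mul_left _ _ _).symm
  have hdom : ∀ φ : ℝ → ℝ, Measurable φ → (∀ y, |φ y| ≤ Ψ y) → Integrable fun y => φ y * f y :=
    fun φ hφ hφΨ => hΨi.mono' (hφ.mul hfm).aestronglyMeasurable (Eventually.of_forall fun y => by
      rw [norm_mul, Real.norm_eq_abs, Real.norm_of_nonneg (hf0 y)]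
      exact mul_le_mul_of_nonneg_right (hφΨ y) (hf0 y))
  obtain ⟨ρ, hρ, hmod⟩ := hequi T η hη
  obtain ⟨t, htS, htfin, hcover⟩ := hS.finite_cover_balls hρ
  have happrox : ∀ p ∈ S, ∃ j ∈ htfin.toFinset,
      ∀ y, |ψ p y - Aᶜ.indicator (ψ j) y| ≤ η + A.indicator Ψ y := by
    intro p hp
    obtain ⟨j, hjt, hpj⟩ := mem_iUnion₂.1 (hcover hp)
    refine ⟨j, htfin.mem_toFinset.2 hjt, fun y => ?_⟩
    by_cases hy : y ∈ A
    · rw [indicator_of_notMem (notMem_compl_iff.2 hy), indicator_of_mem hy, sub_zero]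
      linarith [hΨ p hp y]
    · rw [indicator_of_mem (mem_compl hy), indicator_of_notMem hy, add_zero]
      exact hmod p hp j (htS hjt) hpj y (not_lt.1 hy)
  have := hLLN.tendsto_measure_exists_abs_sum_sub_integral_of_finite_approx hw hf0 hfi
    (fun p hp => hdom _ (hψm p) (hΨ p hp)) htfin.toFinset
    (fun j _ => (hψm j).indicator hTm.compl)
    (fun j hj => hdom _ ((hψm j).indicator hTm.compl) fun y => by
      refine le_trans ?_ (hΨ j (htS (htfin.mem_toFinset.1 hj)) y)
      simpa only [Real.norm_eq_abs] using norm_indicator_le_norm_self (s := Aᶜ) (ψ j) y)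
    (hΨm.indicator hTm) (hgf ▸ hΨi.indicator hTm) hη (by rwa [hgf]) happrox
  rwa [div_mul_cancel₀ e hf1.ne'] at this

theorem tendsto_measure_exists_abs_sum_sub_sum_inter {X : Type*} (hLLN : WeightedLLN P w Y f)
    (hw : ∀ n i ω, 0 ≤ w n i ω) (hfm : Measurable f) (hfpos : ∀ y, 0 < f y)
    (hfi : Integrable f) {M : ℕ → ℝ} (hM : Tendsto M atTop atTop) {G : ℝ → ℝ}
    (hG0 : ∀ y, 0 ≤ G y) (hGi : Integrable fun y => G y * f y) {η : ℕ → ℝ}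
    (hη : Tendsto η atTop (𝓝 0)) {S : Set X} {φ : ℕ → Ω → X → ℝ → ℝ} {ψ : X → ℝ → ℝ}
    {good : ℕ → Set Ω}
    (hclose : ∀ᶠ n in atTop, ∀ᵐ ω ∂P, ω ∈ good n → ∀ i ∈ Finset.range n, ∀ p ∈ S,
      |φ n ω p (Y i ω) - ψ p (Y i ω)| ≤ η n + {y | M n < |y|}.indicator G (Y i ω))
    {e : ℝ} (he : 0 < e) :
    Tendsto (fun n => P ({ω | ∃ p ∈ S, e ≤ |∑ i ∈ Finset.range n, w n i ω * φ n ω p (Y i ω)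
      - ∑ i ∈ Finset.range n, w n i ω * ψ p (Y i ω)|} ∩ good n)) atTop (𝓝 0) := by
  have hsmall : ∀ᶠ n in atTop, |η n| * ((∫ y, f y) + 1) < e / 2 := by
    have := (hη.abs.mul_const ((∫ y, f y) + 1))
    rw [abs_zero, zero_mul] at this
    exact this.eventually (gt_mem_nhds (half_pos he))
  refine tendsto_measure_of_ae_subset_union ?_ (hLLN.tendsto_measure_sum_weights hfi)
    (hLLN.tendsto_measure_tail_sum hw hfm hfpos hG0 hGi hM (half_pos he))
  filter_upwards [hclose, hsmall] with n hn hsn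
  filter_upwards [hn] with ω hω ⟨⟨p, hp, hdev⟩, hgood⟩
  change ω ∈ (_ ∪ _ : Set Ω)
  by_contra hno
  simp only [mem_union, mem_ofPred_eq, not_or, not_le] at hno
  obtain ⟨hW, htail⟩ := hno
  have hsum := abs_sum_mul_sub_sum_mul_le (Finset.range n) (fun i _ => hw n i ω)
    (c := fun i => η n + {y | M n < |y|}.indicator G (Y i ω)) fun i hi => hω hgood i hi p hp
  simp only [mul_add, Finset.sum_add_distrib, ← Finset.sum_mul] at hsum
  have hW' : (∑ i ∈ Finset.range n, w n i ω) * η n ≤ ((∫ y, f y) + 1) * |η n| :=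
    (mul_le_mul_of_nonneg_left (le_abs_self _) (Finset.sum_nonneg fun i _ => hw n i ω)).trans
      (mul_le_mul_of_nonneg_right (by linarith [(abs_lt.1 hW).2]) (abs_nonneg _))
  linarith

end WeightedLLN

end WeightedSums

noncomputable def mixLogLik (f₀ : ℝ → ℝ → ℝ) (g : ℝ → ℝ) (p : ℝ × ℝ) (y : ℝ) : ℝ :=
  Real.log (p.2 * f₀ y p.1 + (1 - p.2) * g y)

section MixLogLik

variable {f₀ : ℝ → ℝ → ℝ} {g : ℝ → ℝ}

theorem measurable_mixLogLik (hf₀ : ∀ θ, Measurable fun y => f₀ y θ) (hg : Measurable g)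
    (p : ℝ × ℝ) : Measurable (mixLogLik f₀ g p) :=
  Real.measurable_log.comp (((hf₀ p.1).const_mul _).add (hg.const_mul _))

theorem continuousOn_mixLogLik (hf₀ : Continuous fun q : ℝ × ℝ => f₀ q.1 q.2) {S : Set (ℝ × ℝ)}
    {y : ℝ} (hpos : ∀ p ∈ S, 0 < p.2 * f₀ y p.1 + (1 - p.2) * g y) :
    ContinuousOn (fun p => mixLogLik f₀ g p y) S :=
  ((continuous_snd.mul (hf₀.comp (continuous_const.prodMk continuous_fst))).add
    ((continuous_const.sub continuous_snd).mul continuous_const)).continuousOn.log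
    fun p hp => (hpos p hp).ne'

theorem abs_mixLogLik_sub_mixLogLik_le {g' : ℝ → ℝ} {p : ℝ × ℝ} {y m d : ℝ}
    (hp : p.2 ∈ Icc (0 : ℝ) 1) (hm : 0 < m) (hlow : m ≤ p.2 * f₀ y p.1 + (1 - p.2) * g y)
    (hg : |g' y - g y| ≤ d) (hd : 2 * d ≤ m) :
    |mixLogLik f₀ g' p y - mixLogLik f₀ g p y| ≤ 2 * d / m := by
  refine abs_log_sub_log_le_of_abs_sub_le hm hlow ?_ hd
  calc |(p.2 * f₀ y p.1 + (1 - p.2) * g' y) - (p.2 * f₀ y p.1 + (1 - p.2) * g y)|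
      = |1 - p.2| * |g' y - g y| := by rw [← abs_mul]; ring_nf
    _ = (1 - p.2) * |g' y - g y| := by rw [abs_of_nonneg (sub_nonneg.2 hp.2)]
    _ ≤ 1 * d := mul_le_mul (by linarith [hp.1]) hg (abs_nonneg _) zero_le_one
    _ = d := one_mul d

theorem exists_abs_mixLogLik_sub_le_of_dist_lt (hf₀c : Continuous fun q : ℝ × ℝ => f₀ q.1 q.2)
    {𝒞 : Set ℝ} (h𝒞 : IsCompact 𝒞) {S : Set (ℝ × ℝ)} (hS : S ⊆ 𝒞 ×ˢ Icc 0 1) {B : ℝ}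
    (hf₀ : ∀ y θ, f₀ y θ ∈ Icc 0 B) (hg : ∀ y, g y ∈ Icc 0 B) {T m : ℝ} (hm : 0 < m)
    (hlow : ∀ p ∈ S, ∀ y, |y| ≤ T → m ≤ p.2 * f₀ y p.1 + (1 - p.2) * g y) {e : ℝ} (he : 0 < e) :
    ∃ ρ > 0, ∀ p ∈ S, ∀ q ∈ S, dist p q < ρ →
      ∀ y, |y| ≤ T → |mixLogLik f₀ g p y - mixLogLik f₀ g q y| ≤ e := by
  have hB : 0 ≤ B := (hg 0).1.trans (hg 0).2
  obtain ⟨ρ₁, hρ₁, hunif⟩ := Metric.uniformContinuousOn_iff.1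
    ((isCompact_Icc.prod h𝒞).uniformContinuousOn_of_continuous hf₀c.continuousOn)
    (e * m / 2) (by positivity)
  set ρ := min ρ₁ (e * m / (2 * (B + 1)))
  have hρB : ρ * B ≤ e * m / 2 :=
    calc ρ * B ≤ e * m / (2 * (B + 1)) * (B + 1) := by
          gcongr
          exacts [min_le_right _ _, by linarith]
      _ = e * m / 2 := by field_simp
  refine ⟨ρ, lt_min hρ₁ (by positivity), fun p hp q hq hpq y hy => ?_⟩
  have hθ : |f₀ y p.1 - f₀ y q.1| < e * m / 2 := by
    simpa [Real.dist_eq] using hunif (y, p.1) ⟨abs_le.1 hy, (hS hp).1⟩ (y, q.1)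
      ⟨abs_le.1 hy, (hS hq).1⟩ (by
        rw [dist_prod_same_left]
        exact (le_max_left _ _).trans_lt (hpq.trans_le (min_le_left _ _)))
  have hα : |p.2 - q.2| * B ≤ ρ * B := by
    gcongr
    rw [← Real.dist_eq]
    exact ((le_max_right _ _).trans_lt hpq).le
  have harg := abs_mix_sub_mix_le (hS hp).2 (hf₀ y q.1) (hg y) (α' := q.2) (u := f₀ y p.1)
  calc |mixLogLik f₀ g p y - mixLogLik f₀ g q y|
      ≤ |(p.2 * f₀ y p.1 + (1 - p.2) * g y) - (q.2 * f₀ y q.1 + (1 - q.2) * g y)| / m :=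
        abs_log_sub_log_le hm (hlow p hp y hy) (hlow q hq y hy)
    _ ≤ e := by
        rw [div_le_iff₀ hm]
        linarith

end MixLogLik

section MixtureCriterion

variable {Ω : Type*} [MeasurableSpace Ω] {P : Measure Ω} {w : ℕ → ℕ → Ω → ℝ}
  {Y : ℕ → Ω → ℝ} {f : ℝ → ℝ} {f₀ : ℝ → ℝ → ℝ} {g : ℝ → ℝ} {S : Set (ℝ × ℝ)}

theorem WeightedLLN.tendsto_measure_exists_abs_sum_mixLogLik_sub_integral
    (hLLN : WeightedLLN P w Y f) (hw : ∀ n i ω, 0 ≤ w n i ω) (hfm : Measurable f)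
    (hf0 : ∀ y, 0 ≤ f y) (hfi : Integrable f) (hf₀c : Continuous fun q : ℝ × ℝ => f₀ q.1 q.2)
    (hf₀m : ∀ θ, Measurable fun y => f₀ y θ) (hgm : Measurable g) {𝒞 : Set ℝ}
    (h𝒞 : IsCompact 𝒞) (hSc : IsCompact S) (hS : S ⊆ 𝒞 ×ˢ Icc 0 1) {B : ℝ}
    (hf₀ : ∀ y θ, f₀ y θ ∈ Icc 0 B) (hg : ∀ y, g y ∈ Icc 0 B) {κ : ℝ} (hκ : 0 < κ)
    {c : ℝ → ℝ} (hcpos : ∀ T, 0 < c T)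
    (hlow : ∀ T, ∀ p ∈ S, ∀ y, |y| ≤ T → κ * c T ≤ p.2 * f₀ y p.1 + (1 - p.2) * g y)
    {Henv : ℝ → ℝ} (hHenv0 : ∀ y, 0 ≤ Henv y) (hHenv : ∀ p ∈ S, ∀ y, |mixLogLik f₀ g p y| ≤ Henv y)
    (hHenvi : Integrable fun y => Henv y * f y) {e : ℝ} (he : 0 < e) :
    Tendsto (fun n => P {ω | ∃ p ∈ S, e ≤ |∑ i ∈ Finset.range n, w n i ω * mixLogLik f₀ g p (Y i ω)
      - ∫ y, mixLogLik f₀ g p y * f y|}) atTop (𝓝 0) := by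
  obtain ⟨Ψ, hΨm, hΨ, hΨH⟩ := exists_measurable_envelope (measurable_mixLogLik hf₀m hgm)
    (fun y => continuousOn_mixLogLik hf₀c fun p hp =>
      (mul_pos hκ (hcpos |y|)).trans_le (hlow _ p hp y le_rfl)) hHenv0 hHenv
  have hΨi : Integrable fun y => Ψ y * f y :=
    hHenvi.mono' (hΨm.mul hfm).aestronglyMeasurable (Eventually.of_forall fun y => by
      rw [norm_mul, Real.norm_of_nonneg (hΨH y).1, Real.norm_of_nonneg (hf0 y)]
      exact mul_le_mul_of_nonneg_right (hΨH y).2 (hf0 y))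
  exact hLLN.tendsto_measure_exists_abs_sum_sub_integral hw hfm hf0 hfi hSc
    (measurable_mixLogLik hf₀m hgm) hΨm hΨ hΨi (fun T e he => exists_abs_mixLogLik_sub_le_of_dist_lt
      hf₀c h𝒞 hS hf₀ hg (mul_pos hκ (hcpos T)) (hlow T) he) he

theorem WeightedLLN.tendsto_measure_exists_abs_sum_mixLogLik_sub_inter
    (hLLN : WeightedLLN P w Y f) (hw : ∀ n i ω, 0 ≤ w n i ω) (hfm : Measurable f)
    (hfpos : ∀ y, 0 < f y) (hfi : Integrable f) (hS : ∀ p ∈ S, p.2 ∈ Icc (0 : ℝ) 1)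
    {κ : ℝ} (hκ : 0 < κ) {c : ℝ → ℝ} (hcpos : ∀ T, 0 < c T)
    (hlow : ∀ T, ∀ p ∈ S, ∀ y, |y| ≤ T → κ * c T ≤ p.2 * f₀ y p.1 + (1 - p.2) * g y)
    {Henv : ℝ → ℝ} (hHenv0 : ∀ y, 0 ≤ Henv y) (hHenv : ∀ p ∈ S, ∀ y, |mixLogLik f₀ g p y| ≤ Henv y)
    {ĝ : ℕ → Ω → ℝ → ℝ} {Hplug : ℝ → ℝ} (hHplug0 : ∀ y, 0 ≤ Hplug y)
    (hHplug : ∀ᶠ n in atTop, ∀ᵐ ω ∂P, ∀ i ∈ Finset.range n, ∀ p ∈ S,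
      |mixLogLik f₀ (ĝ n ω) p (Y i ω)| ≤ Hplug (Y i ω))
    (hi : Integrable fun y => (Hplug y + Henv y) * f y) {M : ℕ → ℝ}
    (hM : Tendsto M atTop atTop) {d : ℕ → ℝ} (hd0 : ∀ n, 0 ≤ d n)
    (hdc : Tendsto (fun n => d n / c (M n)) atTop (𝓝 0)) {e : ℝ} (he : 0 < e) :
    Tendsto (fun n => P ({ω | ∃ p ∈ S, e ≤
      |∑ i ∈ Finset.range n, w n i ω * mixLogLik f₀ (ĝ n ω) p (Y i ω)
        - ∑ i ∈ Finset.range n, w n i ω * mixLogLik f₀ g p (Y i ω)|} ∩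
      {ω | ∀ y, |y| ≤ M n → |ĝ n ω y - g y| ≤ d n})) atTop (𝓝 0) := by
  set η : ℕ → ℝ := fun n => 2 * d n / (κ * c (M n))
  have hη : Tendsto η atTop (𝓝 0) := by
    have := hdc.const_mul (2 / κ)
    rw [mul_zero] at this
    exact this.congr fun n => div_mul_div_comm 2 κ (d n) (c (M n))
  refine hLLN.tendsto_measure_exists_abs_sum_sub_sum_inter hw hfm hfpos hfi hM
    (fun y => add_nonneg (hHplug0 y) (hHenv0 y)) hi hη ?_ he
  filter_upwards [hHplug, hη.eventually (gt_mem_nhds one_pos)] with n hn hη1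
  filter_upwards [hn] with ω hplug hgood i hi p hp
  have hm : 0 < κ * c (M n) := mul_pos hκ (hcpos _)
  by_cases hfar : M n < |Y i ω|
  · rw [indicator_of_mem (show Y i ω ∈ {y | M n < |y|} from hfar)]
    have hη0 : 0 ≤ η n := div_nonneg (mul_nonneg zero_le_two (hd0 n)) hm.le
    linarith [abs_sub (mixLogLik f₀ (ĝ n ω) p (Y i ω)) (mixLogLik f₀ g p (Y i ω)),
      hplug i hi p hp, hHenv p hp (Y i ω)]
  · rw [indicator_of_notMem (show Y i ω ∉ {y | M n < |y|} from hfar), add_zero]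
    have hwin := not_lt.1 hfar
    exact abs_mixLogLik_sub_mixLogLik_le (hS p hp) hm (hlow _ p hp _ hwin) (hgood _ hwin)
      ((div_le_one hm).1 hη1.le)

theorem WeightedLLN.tendsto_measure_exists_abs_sum_mixLogLik_sub
    (hLLN : WeightedLLN P w Y f) (hw : ∀ n i ω, 0 ≤ w n i ω) (hfm : Measurable f)
    (hfpos : ∀ y, 0 < f y) (hfi : Integrable f) (hS : ∀ p ∈ S, p.2 ∈ Icc (0 : ℝ) 1)
    {κ : ℝ} (hκ : 0 < κ) {c : ℝ → ℝ} (hcpos : ∀ T, 0 < c T)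
    (hlow : ∀ T, ∀ p ∈ S, ∀ y, |y| ≤ T → κ * c T ≤ p.2 * f₀ y p.1 + (1 - p.2) * g y)
    {Henv : ℝ → ℝ} (hHenv0 : ∀ y, 0 ≤ Henv y) (hHenv : ∀ p ∈ S, ∀ y, |mixLogLik f₀ g p y| ≤ Henv y)
    {ĝ : ℕ → Ω → ℝ → ℝ} {Hplug : ℝ → ℝ} (hHplug0 : ∀ y, 0 ≤ Hplug y)
    (hHplug : ∀ᶠ n in atTop, ∀ᵐ ω ∂P, ∀ i ∈ Finset.range n, ∀ p ∈ S,
      |mixLogLik f₀ (ĝ n ω) p (Y i ω)| ≤ Hplug (Y i ω))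
    (hi : Integrable fun y => (Hplug y + Henv y) * f y) {M : ℕ → ℝ}
    (hM : Tendsto M atTop atTop) {gexact : ℕ → Ω → ℝ → ℝ} {ε a : ℕ → ℝ}
    (hε : ∀ n ω y, |ĝ n ω y - gexact n ω y| ≤ ε n) (ha0 : ∀ n, 0 ≤ a n)
    (hOp : ∀ δ > 0, ∃ K : ℝ, limsup (fun n =>
      P {ω | ∃ y, |y| ≤ M n ∧ K * a n < |gexact n ω y - g y|}) atTop < ENNReal.ofReal δ)
    (hrc : Tendsto (fun n => (a n + ε n) / c (M n)) atTop (𝓝 0)) {e : ℝ} (he : 0 < e) :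
    Tendsto (fun n => P {ω | ∃ p ∈ S, e ≤
      |∑ i ∈ Finset.range n, w n i ω * mixLogLik f₀ (ĝ n ω) p (Y i ω)
        - ∑ i ∈ Finset.range n, w n i ω * mixLogLik f₀ g p (Y i ω)|}) atTop (𝓝 0) := by
  refine tendsto_measure_of_tendsto_measure_inter
    (good := fun K n => {ω | ∀ y, |y| ≤ M n → |gexact n ω y - g y| ≤ K * a n})
    (fun δ hδ => ?_) fun K => ?_
  · obtain ⟨K, hK⟩ := hOp δ hδ
    refine ⟨K, lt_of_eq_of_lt (congrArg (limsup · atTop) (funext fun n =>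
      congrArg P (ext fun ω => ?_))) hK⟩
    simp [not_le]
  set d : ℕ → ℝ := fun n => (|K| + 1) * |a n + ε n|
  have hdc : Tendsto (fun n => d n / c (M n)) atTop (𝓝 0) := by
    have := hrc.abs.const_mul (|K| + 1)
    rw [abs_zero, mul_zero] at this
    refine this.congr fun n => ?_
    simp only [d, abs_div, abs_of_pos (hcpos (M n)), mul_div_assoc]
  refine tendsto_of_tendsto_of_tendsto_of_le_of_le tendsto_const_nhds
    (hLLN.tendsto_measure_exists_abs_sum_mixLogLik_sub_inter hw hfm hfpos hfi hS hκ hcpos hlow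
      hHenv0 hHenv hHplug0 hHplug hi hM (fun n => by positivity) hdc he)
    (fun _ => zero_le) fun n => measure_mono (inter_subset_inter_right _ fun ω hω y hy => ?_)
  have hεy := hε n ω y
  have hKy := hω y hy
  have hε0 : 0 ≤ ε n := (abs_nonneg _).trans hεy
  calc |ĝ n ω y - g y| ≤ |ĝ n ω y - gexact n ω y| + |gexact n ω y - g y| := abs_sub_le _ _ _
    _ ≤ ε n + |K| * a n := add_le_add hεy (hKy.trans (mul_le_mul_of_nonneg_right
        (le_abs_self K) (ha0 n)))
    _ ≤ (|K| + 1) * |a n + ε n| := by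
        rw [abs_of_nonneg (add_nonneg (ha0 n) hε0)]
        nlinarith [abs_nonneg K, ha0 n]

end MixtureCriterion

theorem stmt_19_general {Ω : Type*} [MeasurableSpace Ω] (P : Measure Ω)
    (Y : ℕ → Ω → ℝ)
    (𝒞 : Set ℝ) (h𝒞 : IsCompact 𝒞) (θstar : ℝ) (hθstar : θstar ∈ 𝒞)
    (αbar αstar : ℝ) (hαbar : 0 < αbar) (hαlt : αbar < αstar) (hαlt' : αstar < 1 - αbar)
    -- Assumption (a): stage-ℓ model
    (f₀ : ℝ → ℝ → ℝ) (fbg : ℝ → ℝ)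
    (hf₀nn : ∀ y θ, 0 ≤ f₀ y θ) (hfbgnn : ∀ y, 0 ≤ fbg y)
    (hf₀meas : ∀ θ, Measurable fun y => f₀ y θ) (hfbgmeas : Measurable fbg)
    (hf₀dens : ∀ θ ∈ 𝒞, ∫ y, f₀ y θ = 1) (hfbgdens : ∫ y, fbg y = 1)
    (fℓ : ℝ → ℝ) (hfℓdef : ∀ y, fℓ y = αstar * f₀ y θstar + (1 - αstar) * fbg y)
    (hfℓpos : ∀ y, 0 < fℓ y)
    (hf₀cont : Continuous fun p : ℝ × ℝ => f₀ p.1 p.2)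
    (c : ℝ → ℝ) (hcpos : ∀ M, 0 < c M)
    (hclow : ∀ (M y θ : ℝ), |y| ≤ M → θ ∈ 𝒞 → c M ≤ f₀ y θ)
    (B : ℝ) (hf₀B : ∀ y θ, f₀ y θ ≤ B) (hfbgB : ∀ y, fbg y ≤ B)
    (Lor : ℝ → ℝ → ℝ)
    (hLordef : ∀ θ α, Lor θ α = ∫ y, Real.log (α * f₀ y θ + (1 - α) * fbg y) * fℓ y)
    (hLorcont : ContinuousOn (fun p : ℝ × ℝ => Lor p.1 p.2)
      (𝒞 ×ˢ Set.Icc αbar (1 - αbar)))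
    (hLormax : ∀ θ ∈ 𝒞, ∀ α ∈ Set.Icc αbar (1 - αbar),
      (θ, α) ≠ (θstar, αstar) → Lor θ α < Lor θstar αstar)
    (Henv : ℝ → ℝ) (hHenvnn : ∀ y, 0 ≤ Henv y)
    (hHenvInt : Integrable (fun y => Henv y * fℓ y))
    (hHenv : ∀ y, ∀ θ ∈ 𝒞, ∀ α ∈ Set.Icc αbar (1 - αbar),
      |Real.log (α * f₀ y θ + (1 - α) * fbg y)| ≤ Henv y)
    -- Assumption (b): kernel, bandwidths, weighted KDE and its FFT approximation
    (h : ℕ → ℝ)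
    (w : ℕ → ℕ → Ω → ℝ) (hwnn : ∀ n i ω, 0 ≤ w n i ω)
    (fexact : ℕ → Ω → ℝ → ℝ)
    (ε : ℕ → ℝ)
    (fFFT : ℕ → Ω → ℝ → ℝ)
    (hFFTapprox : ∀ n ω y, |fFFT n ω y - fexact n ω y| ≤ ε n)
    -- Assumption (c): windowed sup-norm rate
    (M : ℕ → ℝ) (hM : Tendsto M atTop atTop)
    (a : ℕ → ℝ)
    (hadef : ∀ n : ℕ, a n = (h n) ^ 2 + Real.sqrt (Real.log (1 / h n) / (n * h n)))
    (hOp : ∀ δ > 0, ∃ Mb : ℝ, limsup (fun n =>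
        P {ω | ∃ y, |y| ≤ M n ∧ Mb * a n < |fexact n ω y - fbg y|}) atTop
      < ENNReal.ofReal δ)
    (r : ℕ → ℝ) (hrdef : ∀ n, r n = a n + ε n)
    -- Assumption (d)
    (hrc : Tendsto (fun n => r n / c (M n)) atTop (nhds 0))
    -- Assumption (e): residual weights behave like sampling from fℓ
    (hwLLN : ∀ Φ : ℝ → ℝ, Measurable Φ → Integrable (fun y => Φ y * fℓ y) →
      ∀ δ > 0, Tendsto (fun n => P {ω | δ ≤
        |∑ i ∈ Finset.range n, w n i ω * Φ (Y i ω) - ∫ y, Φ y * fℓ y|}) atTop (nhds 0))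
    -- Assumption (f): plug-in envelope
    (Hplug : ℝ → ℝ) (hHplugnn : ∀ y, 0 ≤ Hplug y)
    (hHplugInt : Integrable (fun y => Hplug y * fℓ y))
    (hHplug : ∃ N, ∀ n ≥ N, ∀ᵐ ω ∂P, ∀ i ∈ Finset.range n, ∀ θ ∈ 𝒞,
      ∀ α ∈ Set.Icc αbar (1 - αbar),
      |Real.log (α * f₀ (Y i ω) θ + (1 - α) * fFFT n ω (Y i ω))| ≤ Hplug (Y i ω))
    -- stage-ℓ plug-in criterion and its maximizers
    (Ltil : ℕ → Ω → ℝ → ℝ → ℝ)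
    (hLtil : ∀ n ω θ α, Ltil n ω θ α = ∑ i ∈ Finset.range n,
      w n i ω * Real.log (α * f₀ (Y i ω) θ + (1 - α) * fFFT n ω (Y i ω)))
    (θhat αhat : ℕ → Ω → ℝ)
    (hmem : ∀ n ω, θhat n ω ∈ 𝒞 ∧ αhat n ω ∈ Set.Icc αbar (1 - αbar))
    (hargmax : ∀ n ω, ∀ θ ∈ 𝒞, ∀ α ∈ Set.Icc αbar (1 - αbar),
      Ltil n ω θ α ≤ Ltil n ω (θhat n ω) (αhat n ω)) :
    ∀ δ > 0, Tendsto (fun n =>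
      P {ω | δ ≤ |θhat n ω - θstar| ∨ δ ≤ |αhat n ω - αstar|}) atTop (nhds 0) := by
  intro δ hδ
  have hLLN : WeightedLLN P w Y fℓ := hwLLN
  have hfℓ : fℓ = fun y => αstar * f₀ y θstar + (1 - αstar) * fbg y := funext hfℓdef
  have hfℓm : Measurable fℓ := hfℓ ▸ ((hf₀meas θstar).const_mul _).add (hfbgmeas.const_mul _)
  have hfℓi : Integrable fℓ := hfℓ ▸
    ((Integrable.of_integral_ne_zero (by simp [hf₀dens θstar hθstar])).const_mul _).add
      ((Integrable.of_integral_ne_zero (by simp [hfbgdens])).const_mul _)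
  have hS : 𝒞 ×ˢ Set.Icc αbar (1 - αbar) ⊆ 𝒞 ×ˢ Set.Icc 0 1 :=
    Set.prod_mono subset_rfl (Set.Icc_subset_Icc hαbar.le (by linarith))
  have hlow : ∀ T, ∀ p ∈ 𝒞 ×ˢ Set.Icc αbar (1 - αbar), ∀ y, |y| ≤ T →
      αbar * c T ≤ p.2 * f₀ y p.1 + (1 - p.2) * fbg y := fun T p hp y hy => by
    nlinarith [hclow T y p.1 hy hp.1, hp.2.1, (hS hp).2.2, hfbgnn y, hcpos T]
  have hHenv' : ∀ p ∈ 𝒞 ×ˢ Set.Icc αbar (1 - αbar), ∀ y, |mixLogLik f₀ fbg p y| ≤ Henv y :=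
    fun p hp y => hHenv y p.1 hp.1 p.2 hp.2
  have horacle (e : ℝ) (he : 0 < e) := hLLN.tendsto_measure_exists_abs_sum_mixLogLik_sub_integral
    hwnn hfℓm (fun y => (hfℓpos y).le) hfℓi hf₀cont hf₀meas hfbgmeas h𝒞 (h𝒞.prod isCompact_Icc)
    hS (fun y θ => ⟨hf₀nn y θ, hf₀B y θ⟩) (fun y => ⟨hfbgnn y, hfbgB y⟩) hαbar hcpos hlow
    hHenvnn hHenv' hHenvInt he
  obtain ⟨N, hN⟩ := hHplug
  have hplug (e : ℝ) (he : 0 < e) := hLLN.tendsto_measure_exists_abs_sum_mixLogLik_sub hwnn hfℓm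
    hfℓpos hfℓi (fun p hp => (hS hp).2) hαbar hcpos hlow hHenvnn hHenv' hHplugnn
    (eventually_atTop.2 ⟨N, fun n hn => by
      filter_upwards [hN n hn] with ω hω i hi p hp using hω i hi p.1 hp.1 p.2 hp.2⟩)
    ((hHplugInt.add hHenvInt).congr (Eventually.of_forall fun y => (add_mul _ _ _).symm)) hM
    hFFTapprox (fun n => by rw [hadef n]; positivity) hOp (by simpa only [hrdef] using hrc) he
  have hconv := tendsto_measure_notMem_of_uniform_approx (h𝒞.prod isCompact_Icc)
    Metric.isOpen_ball hLorcont (x₀ := (θstar, αstar)) ⟨hθstar, hαlt.le, hαlt'.le⟩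
    (Metric.mem_ball_self hδ) (fun p hp hne => hLormax p.1 hp.1 p.2 hp.2 hne)
    (fun n ω p => Ltil n ω p.1 p.2) (fun n ω => (θhat n ω, αhat n ω)) hmem
    (fun n ω => hargmax n ω θstar hθstar αstar ⟨hαlt.le, hαlt'.le⟩) fun e he => by
      simp only [hLtil, hLordef]
      exact tendsto_measure_exists_abs_sub_of_tendsto hplug horacle he
  convert hconv using 3 with n
  ext ω
  simp [Prod.dist_eq, Real.dist_eq, or_iff_not_imp_left]

/-- Theorem 4 of the paper (stage-ℓ consistency of the sequential FFT plug-in scheme): under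
Assumptions (a)–(f), any sequence of measurable maximizers `η̂ₙ = (θ̂ₙ, α̂ₙ)` of the stage-ℓ
weighted FFT plug-in criterion converges in probability to the unique maximizer
`η* = (θ*_ℓ, α*)` of the oracle stage-ℓ criterion. -/
theorem stmt_19 {Ω : Type*} [MeasurableSpace Ω] (P : Measure Ω) [IsProbabilityMeasure P]
    (Y : ℕ → Ω → ℝ) (hYmeas : ∀ i, Measurable (Y i))
    (𝒞 : Set ℝ) (h𝒞 : IsCompact 𝒞) (θstar : ℝ) (hθstar : θstar ∈ 𝒞)
    (αbar αstar : ℝ) (hαbar : 0 < αbar) (hαlt : αbar < αstar) (hαlt' : αstar < 1 - αbar)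
    -- Assumption (a): stage-ℓ model
    (f₀ : ℝ → ℝ → ℝ) (fbg : ℝ → ℝ)
    (hf₀nn : ∀ y θ, 0 ≤ f₀ y θ) (hfbgnn : ∀ y, 0 ≤ fbg y)
    (hf₀meas : ∀ θ, Measurable fun y => f₀ y θ) (hfbgmeas : Measurable fbg)
    (hf₀dens : ∀ θ ∈ 𝒞, ∫ y, f₀ y θ = 1) (hfbgdens : ∫ y, fbg y = 1)
    (fℓ : ℝ → ℝ) (hfℓdef : ∀ y, fℓ y = αstar * f₀ y θstar + (1 - αstar) * fbg y)
    (hfℓpos : ∀ y, 0 < fℓ y)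
    (hf₀cont : Continuous fun p : ℝ × ℝ => f₀ p.1 p.2)
    (c : ℝ → ℝ) (hcpos : ∀ M, 0 < c M)
    (hclow : ∀ (M y θ : ℝ), |y| ≤ M → θ ∈ 𝒞 → c M ≤ f₀ y θ)
    (B : ℝ) (hf₀B : ∀ y θ, f₀ y θ ≤ B) (hfbgB : ∀ y, fbg y ≤ B)
    (Lor : ℝ → ℝ → ℝ)
    (hLordef : ∀ θ α, Lor θ α = ∫ y, Real.log (α * f₀ y θ + (1 - α) * fbg y) * fℓ y)
    (hLorcont : ContinuousOn (fun p : ℝ × ℝ => Lor p.1 p.2)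
      (𝒞 ×ˢ Set.Icc αbar (1 - αbar)))
    (hLormax : ∀ θ ∈ 𝒞, ∀ α ∈ Set.Icc αbar (1 - αbar),
      (θ, α) ≠ (θstar, αstar) → Lor θ α < Lor θstar αstar)
    (Henv : ℝ → ℝ) (hHenvnn : ∀ y, 0 ≤ Henv y)
    (hHenvInt : Integrable (fun y => Henv y * fℓ y))
    (hHenv : ∀ y, ∀ θ ∈ 𝒞, ∀ α ∈ Set.Icc αbar (1 - αbar),
      |Real.log (α * f₀ y θ + (1 - α) * fbg y)| ≤ Henv y)
    -- Assumption (b): kernel, bandwidths, weighted KDE and its FFT approximation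
    (K : ℝ → ℝ) (hKeven : ∀ u, K (-u) = K u)
    (Kbd : ℝ) (hKbd : ∀ u, |K u| ≤ Kbd)
    (lip : NNReal) (hKlip : LipschitzWith lip K)
    (hKC2 : ContDiff ℝ 2 K)
    (hKint : ∫ u, K u = 1) (hKmom1 : ∫ u, u * K u = 0)
    (hKmom2 : Integrable fun u => u ^ 2 * |K u|)
    (h : ℕ → ℝ) (hhpos : ∀ n, 0 < h n) (hhanti : Antitone h)
    (hh0 : Tendsto h atTop (nhds 0))
    (hnh : Tendsto (fun n : ℕ => n * h n / Real.log (1 / h n)) atTop atTop)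
    (w : ℕ → ℕ → Ω → ℝ) (hwnn : ∀ n i ω, 0 ≤ w n i ω)
    (fexact : ℕ → Ω → ℝ → ℝ)
    (hfexact : ∀ n ω y, fexact n ω y
      = ∑ i ∈ Finset.range n, w n i ω * ((h n)⁻¹ * K ((y - Y i ω) / h n)))
    (Δ : ℕ → ℝ) (hΔpos : ∀ n, 0 < Δ n) (hΔ0 : Tendsto Δ atTop (nhds 0))
    (ε : ℕ → ℝ) (hε0 : Tendsto ε atTop (nhds 0))
    (fFFT : ℕ → Ω → ℝ → ℝ)
    (hFFTapprox : ∀ n ω y, |fFFT n ω y - fexact n ω y| ≤ ε n)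
    -- Assumption (c): windowed sup-norm rate
    (M : ℕ → ℝ) (hM : Tendsto M atTop atTop)
    (a : ℕ → ℝ)
    (hadef : ∀ n : ℕ, a n = (h n) ^ 2 + Real.sqrt (Real.log (1 / h n) / (n * h n)))
    (hOp : ∀ δ > 0, ∃ Mb : ℝ, limsup (fun n =>
        P {ω | ∃ y, |y| ≤ M n ∧ Mb * a n < |fexact n ω y - fbg y|}) atTop
      < ENNReal.ofReal δ)
    (r : ℕ → ℝ) (hrdef : ∀ n, r n = a n + ε n)
    -- Assumption (d)
    (hrc : Tendsto (fun n => r n / c (M n)) atTop (nhds 0))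
    (htail : Tendsto (fun n =>
        (∫ y, Set.indicator {y : ℝ | M n < |y|} (fun _ => (1:ℝ)) y * fℓ y)
          * Real.log (1 / h n)) atTop (nhds 0))
    -- Assumption (e): residual weights behave like sampling from fℓ
    (hwLLN : ∀ Φ : ℝ → ℝ, Measurable Φ → Integrable (fun y => Φ y * fℓ y) →
      ∀ δ > 0, Tendsto (fun n => P {ω | δ ≤
        |∑ i ∈ Finset.range n, w n i ω * Φ (Y i ω) - ∫ y, Φ y * fℓ y|}) atTop (nhds 0))
    (C : ℝ) (hwbd : ∃ N, ∀ n ≥ N, ∀ i ∈ Finset.range n, ∀ ω, w n i ω ≤ C / n)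
    -- Assumption (f): plug-in envelope
    (Hplug : ℝ → ℝ) (hHplugnn : ∀ y, 0 ≤ Hplug y)
    (hHplugInt : Integrable (fun y => Hplug y * fℓ y))
    (hHplug : ∃ N, ∀ n ≥ N, ∀ᵐ ω ∂P, ∀ i ∈ Finset.range n, ∀ θ ∈ 𝒞,
      ∀ α ∈ Set.Icc αbar (1 - αbar),
      |Real.log (α * f₀ (Y i ω) θ + (1 - α) * fFFT n ω (Y i ω))| ≤ Hplug (Y i ω))
    (hHplugTail : Tendsto (fun n =>
      ∫ y, Set.indicator {y : ℝ | M n < |y|} Hplug y * fℓ y) atTop (nhds 0))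
    -- stage-ℓ plug-in criterion and its maximizers
    (Ltil : ℕ → Ω → ℝ → ℝ → ℝ)
    (hLtil : ∀ n ω θ α, Ltil n ω θ α = ∑ i ∈ Finset.range n,
      w n i ω * Real.log (α * f₀ (Y i ω) θ + (1 - α) * fFFT n ω (Y i ω)))
    (θhat αhat : ℕ → Ω → ℝ)
    (hθmeas : ∀ n, Measurable (θhat n)) (hαmeas : ∀ n, Measurable (αhat n))
    (hmem : ∀ n ω, θhat n ω ∈ 𝒞 ∧ αhat n ω ∈ Set.Icc αbar (1 - αbar))
    (hargmax : ∀ n ω, ∀ θ ∈ 𝒞, ∀ α ∈ Set.Icc αbar (1 - αbar),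
      Ltil n ω θ α ≤ Ltil n ω (θhat n ω) (αhat n ω)) :
    ∀ δ > 0, Tendsto (fun n =>
      P {ω | δ ≤ |θhat n ω - θstar| ∨ δ ≤ |αhat n ω - αstar|}) atTop (nhds 0) :=
  stmt_19_general P Y 𝒞 h𝒞 θstar hθstar αbar αstar hαbar hαlt hαlt' f₀ fbg hf₀nn hfbgnn hf₀meas
    hfbgmeas hf₀dens hfbgdens fℓ hfℓdef hfℓpos hf₀cont c hcpos hclow B hf₀B hfbgB Lor hLordef
    hLorcont hLormax Henv hHenvnn hHenvInt hHenv h w hwnn fexact ε fFFT hFFTapprox M hM a hadef hOp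
    r hrdef hrc hwLLN Hplug hHplugnn hHplugInt hHplug Ltil hLtil θhat αhat hmem hargmax
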